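/- arXiv:2406.11118 — 8 statements merged into one kernel-verified Lean document; each statement's English description precedes it below -/
import Mathlib

section
/- Let F be an n×m row-stochastic matrix and c^const = (c', …, c', c_n) with c' < c_n. A vector t ∈ ℝ_{≥0}^m implements action n in the setting (F, c^const) if and only if, writing B = max_j t_j > 0 and ψ = t/B, the test ψ satisfies FP_i(ψ) + FN(ψ) ≤ 1 − (c_n − c')/B for every i < n, where FP_i(ψ) = Σ_j F_{ij}ψ_j and FN(ψ) = Σ_j F_{nj}(1 − ψ_j). -/
/-! Dividing each incentive constraint by `B > 0` turns it into the test inequality, once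
`FN(ψ)` is rewritten as `1 - Σ_j F_{nj} ψ_j` using that the last row of `F` sums to `1`. -/

theorem sum_mul_one_sub_of_sum_eq_one {ι R : Type*} [CommRing R] {s : Finset ι} {p : ι → R}
    (hp : ∑ j ∈ s, p j = 1) (ψ : ι → R) :
    ∑ j ∈ s, p j * (1 - ψ j) = 1 - ∑ j ∈ s, p j * ψ j := by
  simp only [mul_sub, mul_one, Finset.sum_sub_distrib, hp]

theorem sub_le_sub_iff_div_add_one_sub_div_le {K : Type*} [Field K] [LinearOrder K]
    [IsStrictOrderedRing K] {a b c' cn B : K} (hB : 0 < B) :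
    a - c' ≤ b - cn ↔ a / B + (1 - b / B) ≤ 1 - (cn - c') / B := by
  have key : 1 - (cn - c') / B - (a / B + (1 - b / B)) = ((b - cn) - (a - c')) / B := by
    field_simp
    ring
  rw [← sub_nonneg, ← sub_nonneg (b := a / B + _), key, le_div_iff₀ hB, zero_mul]

theorem uniform_cost_ic_iff_test_risk_general
    (n m : ℕ)
    (F : Fin (n + 1) → Fin m → ℝ)
    (hFsum : ∀ i, ∑ j, F i j = 1)
    (c' cn : ℝ)
    (t : Fin m → ℝ)
    (B : ℝ)
    (hBpos : 0 < B)
    (ψ : Fin m → ℝ) (hψ : ∀ j, ψ j = t j / B) :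
    (∀ i, i ≠ Fin.last n →
      ∑ j, F i j * t j - c' ≤ ∑ j, F (Fin.last n) j * t j - cn) ↔
    (∀ i, i ≠ Fin.last n →
      (∑ j, F i j * ψ j) + (∑ j, F (Fin.last n) j * (1 - ψ j)) ≤
        1 - (cn - c') / B) := by
  have hscaled : ∀ i, ∑ j, F i j * ψ j = (∑ j, F i j * t j) / B := fun i => by
    simp only [hψ, mul_div_assoc, Finset.sum_div]
  refine forall₂_congr fun i _ => ?_
  rw [sum_mul_one_sub_of_sum_eq_one (hFsum _), hscaled, hscaled]
  exact sub_le_sub_iff_div_add_one_sub_div_le hBpos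

/-- Under uniform non-target costs, a contract implements the target action
iff its normalized test `ψ = t / B` satisfies `FP_i + FN ≤ 1 - (c_n - c')/B`
for every non-target action. -/
theorem uniform_cost_ic_iff_test_risk
    (n m : ℕ) (hm : 0 < m)
    (F : Fin (n + 1) → Fin m → ℝ)
    (hFnonneg : ∀ i j, 0 ≤ F i j)
    (hFsum : ∀ i, ∑ j, F i j = 1)
    (c' cn : ℝ) (hc' : 0 ≤ c') (hcn : c' < cn)
    (t : Fin m → ℝ) (ht : ∀ j, 0 ≤ t j)
    (B : ℝ) (hB : B = Finset.univ.sup' ⟨(⟨0, hm⟩ : Fin m), Finset.mem_univ _⟩ t)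
    (hBpos : 0 < B)
    (ψ : Fin m → ℝ) (hψ : ∀ j, ψ j = t j / B) :
    (∀ i, i ≠ Fin.last n →
      ∑ j, F i j * t j - c' ≤ ∑ j, F (Fin.last n) j * t j - cn) ↔
    (∀ i, i ≠ Fin.last n →
      (∑ j, F i j * ψ j) + (∑ j, F (Fin.last n) j * (1 - ψ j)) ≤
        1 - (cn - c') / B) :=
  uniform_cost_ic_iff_test_risk_general n m F hFsum c' cn t B hBpos ψ hψ
end

section
/- Let F be an n×m row-stochastic matrix, c' < c_n, and c^const = (c',…,c',c_n). Let ψ* ∈ [0,1]^m be a minimizer of R(ψ) = max_{i<n} (Σ_j F_{ij}ψ_j + Σ_j F_{nj}(1−ψ_j)) with optimal value R* < 1. Then the contract t* = (c_n − c')/(1 − R*) · ψ* implements action n, has budget max_j t*_j = (c_n − c')/(1 − R*), and every contract implementing action n in (F, c^const) has budget at least (c_n − c')/(1 − R*). -/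
/-!
With the alternative `p` a probability vector, the risk of a test `ψ` against a null `q` is
`q ⬝ᵥ ψ + p ⬝ᵥ (1 - ψ) = 1 - (p ⬝ᵥ ψ - q ⬝ᵥ ψ)`, while a contract `t` implements the last action
at uniform cost `c'` exactly when every gap `p ⬝ᵥ t - q ⬝ᵥ t` is at least `cn - c'`. Both
conditions are linear in their argument, so contracts and tests correspond by rescaling:
a contract of budget `T` becomes, divided by `T`, a test of risk at most `1 - (cn - c') / T`, and
a test of risk `R*` becomes, multiplied by `(cn - c') / (1 - R*)`, an implementing contract.
-/

open Matrix Finset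

section

variable {κ ι : Type*} [Fintype ι]

theorem risk_eq_one_sub_gap {p : ι → ℝ} (hp : ∑ j, p j = 1) (q ψ : ι → ℝ) :
    q ⬝ᵥ ψ + p ⬝ᵥ (1 - ψ) = 1 - (p ⬝ᵥ ψ - q ⬝ᵥ ψ) := by
  rw [dotProduct_sub, dotProduct_one, hp]
  ring

theorem implements_of_gap_le {Q : κ → ι → ℝ} {p ψ : ι → ℝ} {g c' cn : ℝ}
    (hgap : ∀ i, g ≤ p ⬝ᵥ ψ - Q i ⬝ᵥ ψ) (hg : 0 < g) (hcn : c' ≤ cn) (i : κ) :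
    Q i ⬝ᵥ (((cn - c') / g) • ψ) - c' ≤ p ⬝ᵥ (((cn - c') / g) • ψ) - cn := by
  have hscaled : (cn - c') / g * g ≤ (cn - c') / g * (p ⬝ᵥ ψ - Q i ⬝ᵥ ψ) :=
    mul_le_mul_of_nonneg_left (hgap i) (div_nonneg (sub_nonneg.mpr hcn) hg.le)
  rw [div_mul_cancel₀ _ hg.ne'] at hscaled
  simp only [dotProduct_smul, smul_eq_mul]
  linarith

theorem budget_pos_of_implements [Nonempty κ] {Q : κ → ι → ℝ} {p t : ι → ℝ} {c' cn : ℝ}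
    (hcn : c' < cn) (ht : 0 ≤ t) (himpl : ∀ i, Q i ⬝ᵥ t - c' ≤ p ⬝ᵥ t - cn)
    (hι : (univ : Finset ι).Nonempty) : 0 < univ.sup' hι t := by
  have ht_ne : t ≠ 0 := by
    rintro rfl
    have h := himpl (Classical.arbitrary κ)
    simp only [dotProduct_zero, zero_sub] at h
    linarith
  obtain ⟨j, hj⟩ := Function.ne_iff.mp ht_ne
  exact (lt_sup'_iff hι).mpr ⟨j, mem_univ j, lt_of_le_of_ne (ht j) (Ne.symm hj)⟩

variable [Fintype κ] [Nonempty κ]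

noncomputable def compositeRisk (Q : κ → ι → ℝ) (p ψ : ι → ℝ) : ℝ :=
  univ.sup' univ_nonempty fun i => Q i ⬝ᵥ ψ + p ⬝ᵥ (1 - ψ)

theorem compositeRisk_le_iff {Q : κ → ι → ℝ} {p ψ : ι → ℝ} (hp : ∑ j, p j = 1) {r : ℝ} :
    compositeRisk Q p ψ ≤ r ↔ ∀ i, 1 - r ≤ p ⬝ᵥ ψ - Q i ⬝ᵥ ψ := by
  simp only [compositeRisk, sup'_le_iff, mem_univ, true_implies, risk_eq_one_sub_gap hp]
  exact forall_congr' fun _ => sub_le_comm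

theorem compositeRisk_inv_smul_le {Q : κ → ι → ℝ} {p t : ι → ℝ} (hp : ∑ j, p j = 1)
    {c' cn T : ℝ} (himpl : ∀ i, Q i ⬝ᵥ t - c' ≤ p ⬝ᵥ t - cn) (hT : 0 < T) :
    compositeRisk Q p (T⁻¹ • t) ≤ 1 - (cn - c') / T := by
  rw [compositeRisk_le_iff hp]
  intro i
  rw [sub_sub_cancel, dotProduct_smul, dotProduct_smul, smul_eq_mul, smul_eq_mul, ← mul_sub,
    div_eq_inv_mul]
  exact mul_le_mul_of_nonneg_left (by linarith [himpl i]) (inv_nonneg.mpr hT.le)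

theorem div_one_sub_le_budget {Q : κ → ι → ℝ} {p t : ι → ℝ} (hp : ∑ j, p j = 1)
    {c' cn Rstar : ℝ} (hcn : c' < cn)
    (hmin : ∀ ψ : ι → ℝ, 0 ≤ ψ → ψ ≤ 1 → Rstar ≤ compositeRisk Q p ψ) (hRlt : Rstar < 1)
    (ht : 0 ≤ t) (himpl : ∀ i, Q i ⬝ᵥ t - c' ≤ p ⬝ᵥ t - cn) (hι : (univ : Finset ι).Nonempty) :
    (cn - c') / (1 - Rstar) ≤ univ.sup' hι t := by
  set T := univ.sup' hι t
  have hT : 0 < T := budget_pos_of_implements hcn ht himpl hι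
  have hψ0 : 0 ≤ T⁻¹ • t := smul_nonneg (inv_nonneg.mpr hT.le) ht
  have hψ1 : T⁻¹ • t ≤ 1 := fun j => by
    simpa [inv_mul_le_iff₀ hT] using le_sup' t (mem_univ j)
  have hrisk : Rstar ≤ 1 - (cn - c') / T :=
    (hmin _ hψ0 hψ1).trans (compositeRisk_inv_smul_le hp himpl hT)
  rw [div_le_iff₀ (by linarith)]
  rw [le_sub_comm, div_le_iff₀ hT] at hrisk
  linarith

end

theorem min_budget_uniform_cost_statistical_contract_general
    (n m : ℕ) (hn : 0 < n) (hm : 0 < m)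
    (F : Fin (n + 1) → Fin m → ℝ)
    (hFsum : ∀ i, ∑ j, F i j = 1)
    (c' cn : ℝ) (hcn : c' < cn)
    (R : (Fin m → ℝ) → ℝ)
    (hR : ∀ ψ, R ψ = Finset.univ.sup' ⟨(⟨0, hn⟩ : Fin n), Finset.mem_univ _⟩
      (fun i : Fin n =>
        (∑ j, F i.castSucc j * ψ j) + (∑ j, F (Fin.last n) j * (1 - ψ j))))
    (ψStar : Fin m → ℝ)
    (hψStarBox : ∀ j, 0 ≤ ψStar j ∧ ψStar j ≤ 1)
    (hψStarMin : ∀ ψ : Fin m → ℝ, (∀ j, 0 ≤ ψ j ∧ ψ j ≤ 1) → R ψStar ≤ R ψ)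
    (Rstar : ℝ) (hRstar : Rstar = R ψStar) (hRlt : Rstar < 1)
    (tStar : Fin m → ℝ)
    (htStar : ∀ j, tStar j = (cn - c') / (1 - Rstar) * ψStar j) :
    (∀ i, i ≠ Fin.last n →
      ∑ j, F i j * tStar j - c' ≤ ∑ j, F (Fin.last n) j * tStar j - cn) ∧
    (Finset.univ.sup' ⟨(⟨0, hm⟩ : Fin m), Finset.mem_univ _⟩ tStar =
      (cn - c') / (1 - Rstar)) ∧
    (∀ t : Fin m → ℝ, (∀ j, 0 ≤ t j) →
      (∀ i, i ≠ Fin.last n →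
        ∑ j, F i j * t j - c' ≤ ∑ j, F (Fin.last n) j * t j - cn) →
      (cn - c') / (1 - Rstar) ≤
        Finset.univ.sup' ⟨(⟨0, hm⟩ : Fin m), Finset.mem_univ _⟩ t) := by
  have : Nonempty (Fin n) := ⟨⟨0, hn⟩⟩
  have hp : ∑ j, F (Fin.last n) j = 1 := hFsum _
  have hRisk : ∀ ψ, R ψ = compositeRisk (fun i : Fin n => F i.castSucc) (F (Fin.last n)) ψ := hR
  have hgap : ∀ i : Fin n, 1 - Rstar ≤ F (Fin.last n) ⬝ᵥ ψStar - F i.castSucc ⬝ᵥ ψStar :=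
    (compositeRisk_le_iff hp).mp (by rw [hRstar, hRisk])
  have hB : 0 ≤ (cn - c') / (1 - Rstar) := div_nonneg (by linarith) (by linarith)
  have himpl : ∀ i, i ≠ Fin.last n →
      ∑ j, F i j * tStar j - c' ≤ ∑ j, F (Fin.last n) j * tStar j - cn := by
    intro i hi
    obtain ⟨i, rfl⟩ := Fin.exists_castSucc_eq.mpr hi
    rw [show tStar = ((cn - c') / (1 - Rstar)) • ψStar from funext htStar]
    exact implements_of_gap_le hgap (sub_pos.mpr hRlt) hcn.le i
  have hlower : ∀ t : Fin m → ℝ, (∀ j, 0 ≤ t j) →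
      (∀ i, i ≠ Fin.last n →
        ∑ j, F i j * t j - c' ≤ ∑ j, F (Fin.last n) j * t j - cn) →
      (cn - c') / (1 - Rstar) ≤ Finset.univ.sup' ⟨(⟨0, hm⟩ : Fin m), Finset.mem_univ _⟩ t :=
    fun t ht himpl => div_one_sub_le_budget hp hcn
      (fun ψ h0 h1 => by rw [hRstar, ← hRisk]; exact hψStarMin ψ fun j => ⟨h0 j, h1 j⟩)
      hRlt ht (fun i => himpl _ (Fin.castSucc_lt_last i).ne) _
  have hupper : Finset.univ.sup' ⟨(⟨0, hm⟩ : Fin m), Finset.mem_univ _⟩ tStar ≤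
      (cn - c') / (1 - Rstar) :=
    sup'_le _ _ fun j _ => htStar j ▸ mul_le_of_le_one_right hB (hψStarBox j).2
  have htStar_nonneg : ∀ j, 0 ≤ tStar j := fun j => htStar j ▸ mul_nonneg hB (hψStarBox j).1
  exact ⟨himpl, hupper.antisymm (hlower tStar htStar_nonneg himpl), hlower⟩

/-- Min-budget optimality in uniform-cost settings: scaling the minimax
sum-optimal test by `(c_n - c')/(1 - R*)` yields the min-budget contract. -/
theorem min_budget_uniform_cost_statistical_contract
    (n m : ℕ) (hn : 0 < n) (hm : 0 < m)
    (F : Fin (n + 1) → Fin m → ℝ)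
    (hFnonneg : ∀ i j, 0 ≤ F i j)
    (hFsum : ∀ i, ∑ j, F i j = 1)
    (c' cn : ℝ) (hc' : 0 ≤ c') (hcn : c' < cn)
    (R : (Fin m → ℝ) → ℝ)
    (hR : ∀ ψ, R ψ = Finset.univ.sup' ⟨(⟨0, hn⟩ : Fin n), Finset.mem_univ _⟩
      (fun i : Fin n =>
        (∑ j, F i.castSucc j * ψ j) + (∑ j, F (Fin.last n) j * (1 - ψ j))))
    (ψStar : Fin m → ℝ)
    (hψStarBox : ∀ j, 0 ≤ ψStar j ∧ ψStar j ≤ 1)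
    (hψStarMin : ∀ ψ : Fin m → ℝ, (∀ j, 0 ≤ ψ j ∧ ψ j ≤ 1) → R ψStar ≤ R ψ)
    (Rstar : ℝ) (hRstar : Rstar = R ψStar) (hRlt : Rstar < 1)
    (tStar : Fin m → ℝ)
    (htStar : ∀ j, tStar j = (cn - c') / (1 - Rstar) * ψStar j) :
    (∀ i, i ≠ Fin.last n →
      ∑ j, F i j * tStar j - c' ≤ ∑ j, F (Fin.last n) j * tStar j - cn) ∧
    (Finset.univ.sup' ⟨(⟨0, hm⟩ : Fin m), Finset.mem_univ _⟩ tStar =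
      (cn - c') / (1 - Rstar)) ∧
    (∀ t : Fin m → ℝ, (∀ j, 0 ≤ t j) →
      (∀ i, i ≠ Fin.last n →
        ∑ j, F i j * t j - c' ≤ ∑ j, F (Fin.last n) j * t j - cn) →
      (cn - c') / (1 - Rstar) ≤
        Finset.univ.sup' ⟨(⟨0, hm⟩ : Fin m), Finset.mem_univ _⟩ t) :=
  min_budget_uniform_cost_statistical_contract_general n m hn hm F hFsum c' cn hcn R hR ψStar
    hψStarBox hψStarMin Rstar hRstar hRlt tStar htStar
end

section
/- Let F be an n×m row-stochastic matrix, c' < c_n, c^const = (c',…,c',c_n). Suppose ψ* ∈ [0,1]^m minimizes ρ(ψ) = max_{i<n} (Σ_j F_{ij}ψ_j)/(Σ_j F_{nj}ψ_j) over tests with Σ_j F_{nj}ψ_j > 0, with optimal value ρ* < 1. Then the contract t* = (c_n − c')/(TP(ψ*) − FP(ψ*)) · ψ*, where TP(ψ) = Σ_j F_{nj}ψ_j and FP(ψ) = max_{i<n} Σ_j F_{ij}ψ_j, implements action n with expected payment Σ_j F_{nj}t*_j = (c_n − c')/(1 − ρ*), and every contract implementing action n in (F, c^const) has expected payment under F_n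 at least (c_n − c')/(1 − ρ*). -/
/-!
Scaling a test `ψ` by `k ≥ 0` scales both `TP` and `FP` by `k`, so the ratio risk is
scale-invariant, and in the uniform-cost setting a contract `t` implements the last action
exactly when `FP t ≤ TP t - (c_n - c')`. Hence `k • ψ` implements it as soon as
`k (TP ψ - FP ψ) = c_n - c'`, at payment `(c_n - c') / (1 - ρ ψ)`. Conversely, an implementing
contract rescaled into `[0,1]^m` is a test of ratio risk at most `1 - (c_n - c') / TP t`, and
comparing with `ρ*` bounds its payment `TP t` from below.
-/

open Finset Matrix

variable {ι : Type*} [Fintype ι] {n : ℕ}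

def truePositive (F : Fin (n + 1) → ι → ℝ) (ψ : ι → ℝ) : ℝ :=
  F (Fin.last n) ⬝ᵥ ψ

def falsePositive [NeZero n] (F : Fin (n + 1) → ι → ℝ) (ψ : ι → ℝ) : ℝ :=
  univ.sup' univ_nonempty fun k : Fin n => F k.castSucc ⬝ᵥ ψ

noncomputable def ratioRisk [NeZero n] (F : Fin (n + 1) → ι → ℝ) (ψ : ι → ℝ) : ℝ :=
  falsePositive F ψ / truePositive F ψ

def ImplementsLastUniform (F : Fin (n + 1) → ι → ℝ) (c' cn : ℝ) (t : ι → ℝ) : Prop :=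
  ∀ i, i ≠ Fin.last n → F i ⬝ᵥ t - c' ≤ F (Fin.last n) ⬝ᵥ t - cn

theorem truePositive_smul (F : Fin (n + 1) → ι → ℝ) (k : ℝ) (ψ : ι → ℝ) :
    truePositive F (k • ψ) = k * truePositive F ψ :=
  dotProduct_smul k _ ψ

section

variable [NeZero n] (F : Fin (n + 1) → ι → ℝ)

theorem falsePositive_smul {k : ℝ} (hk : 0 ≤ k) (ψ : ι → ℝ) :
    falsePositive F (k • ψ) = k * falsePositive F ψ := by
  simp only [falsePositive, dotProduct_smul, smul_eq_mul, mul₀_sup' hk]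

theorem falsePositive_nonneg (hF : ∀ i j, 0 ≤ F i j) {ψ : ι → ℝ} (hψ : 0 ≤ ψ) :
    0 ≤ falsePositive F ψ :=
  (dotProduct_nonneg_of_nonneg (hF _) hψ).trans
    (le_sup' (fun k : Fin n => F k.castSucc ⬝ᵥ ψ) (mem_univ 0))

theorem ratioRisk_smul {k : ℝ} (hk : 0 < k) (ψ : ι → ℝ) :
    ratioRisk F (k • ψ) = ratioRisk F ψ := by
  rw [ratioRisk, ratioRisk, truePositive_smul, falsePositive_smul F hk.le,
    mul_div_mul_left _ _ hk.ne']

theorem implementsLastUniform_iff {c' cn : ℝ} {t : ι → ℝ} :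
    ImplementsLastUniform F c' cn t ↔ falsePositive F t ≤ truePositive F t - (cn - c') := by
  rw [ImplementsLastUniform, Fin.forall_fin_succ', falsePositive, sup'_le_iff]
  simp only [ne_eq, Fin.castSucc_ne_last, not_false_eq_true, forall_const, not_true_eq_false,
    IsEmpty.forall_iff, and_true, mem_univ, truePositive]
  refine forall_congr' fun k => ?_
  constructor <;> intro h <;> linarith

theorem implementsLastUniform_smul {c' cn : ℝ} (hc : c' ≤ cn) {ψ : ι → ℝ}
    (hψ : falsePositive F ψ < truePositive F ψ) :
    ImplementsLastUniform F c' cn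
      (((cn - c') / (truePositive F ψ - falsePositive F ψ)) • ψ) := by
  have hgap : 0 < truePositive F ψ - falsePositive F ψ := sub_pos.mpr hψ
  set k := (cn - c') / (truePositive F ψ - falsePositive F ψ)
  have hk_gap : k * (truePositive F ψ - falsePositive F ψ) = cn - c' :=
    div_mul_cancel₀ _ hgap.ne'
  rw [implementsLastUniform_iff, truePositive_smul,
    falsePositive_smul F (div_nonneg (sub_nonneg.mpr hc) hgap.le)]
  linarith

theorem truePositive_smul_eq_div_one_sub_ratioRisk (Δ : ℝ) {ψ : ι → ℝ}
    (hTP : 0 < truePositive F ψ) (hψ : falsePositive F ψ < truePositive F ψ) :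
    truePositive F ((Δ / (truePositive F ψ - falsePositive F ψ)) • ψ) =
      Δ / (1 - ratioRisk F ψ) := by
  have hgap : truePositive F ψ - falsePositive F ψ ≠ 0 := (sub_pos.mpr hψ).ne'
  rw [truePositive_smul, ratioRisk]
  field_simp

theorem truePositive_pos_of_implementsLastUniform (hF : ∀ i j, 0 ≤ F i j) {c' cn : ℝ}
    (hc : c' < cn) {t : ι → ℝ} (ht : 0 ≤ t) (himp : ImplementsLastUniform F c' cn t) :
    0 < truePositive F t := by
  rw [implementsLastUniform_iff] at himp
  linarith [falsePositive_nonneg F hF ht]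

theorem ratioRisk_le_one_sub_div_of_implementsLastUniform {c' cn : ℝ} {t : ι → ℝ}
    (hTP : 0 < truePositive F t) (himp : ImplementsLastUniform F c' cn t) :
    ratioRisk F t ≤ 1 - (cn - c') / truePositive F t := by
  rw [implementsLastUniform_iff] at himp
  rw [ratioRisk, one_sub_div hTP.ne']
  exact div_le_div_of_nonneg_right himp hTP.le

end

theorem exists_pos_smul_mem_unitBox {t : ι → ℝ} (ht : 0 ≤ t) :
    ∃ B : ℝ, 0 < B ∧ ∀ j, 0 ≤ (B • t) j ∧ (B • t) j ≤ 1 := by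
  have hB : 0 < ∑ j, t j + 1 := by linarith [sum_nonneg fun j (_ : j ∈ univ) => ht j]
  refine ⟨(∑ j, t j + 1)⁻¹, inv_pos.mpr hB, fun j => ⟨?_, ?_⟩⟩
  · exact mul_nonneg (inv_pos.mpr hB).le (ht j)
  · rw [Pi.smul_apply, smul_eq_mul, inv_mul_le_one₀ hB]
    linarith [single_le_sum (fun j _ => ht j) (mem_univ j)]

theorem div_one_sub_le_of_le_one_sub_div {Δ T ρ : ℝ} (hT : 0 < T) (hρ : ρ < 1)
    (h : ρ ≤ 1 - Δ / T) : Δ / (1 - ρ) ≤ T := by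
  rw [div_le_iff₀ (sub_pos.mpr hρ)]
  rw [le_sub_comm, div_le_iff₀ hT] at h
  linarith

theorem min_pay_uniform_cost_statistical_contract_general
    (n m : ℕ) (hn : 0 < n)
    (F : Fin (n + 1) → Fin m → ℝ)
    (hFnonneg : ∀ i j, 0 ≤ F i j)
    (c' cn : ℝ) (hcn : c' < cn)
    (TP : (Fin m → ℝ) → ℝ)
    (hTP : ∀ ψ, TP ψ = ∑ j, F (Fin.last n) j * ψ j)
    (FP : (Fin m → ℝ) → ℝ)
    (hFP : ∀ ψ, FP ψ = Finset.univ.sup' ⟨(⟨0, hn⟩ : Fin n), Finset.mem_univ _⟩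
      (fun i : Fin n => ∑ j, F i.castSucc j * ψ j))
    (ρ : (Fin m → ℝ) → ℝ)
    (hρ : ∀ ψ, ρ ψ = FP ψ / TP ψ)
    (ψStar : Fin m → ℝ)
    (hψStarTP : 0 < TP ψStar)
    (hψStarMin : ∀ ψ : Fin m → ℝ, (∀ j, 0 ≤ ψ j ∧ ψ j ≤ 1) → 0 < TP ψ →
      ρ ψStar ≤ ρ ψ)
    (ρstar : ℝ) (hρstar : ρstar = ρ ψStar) (hρlt : ρstar < 1)
    (tStar : Fin m → ℝ)
    (htStar : ∀ j, tStar j = (cn - c') / (TP ψStar - FP ψStar) * ψStar j) :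
    (∀ i, i ≠ Fin.last n →
      ∑ j, F i j * tStar j - c' ≤ ∑ j, F (Fin.last n) j * tStar j - cn) ∧
    (∑ j, F (Fin.last n) j * tStar j = (cn - c') / (1 - ρstar)) ∧
    (∀ t : Fin m → ℝ, (∀ j, 0 ≤ t j) →
      (∀ i, i ≠ Fin.last n →
        ∑ j, F i j * t j - c' ≤ ∑ j, F (Fin.last n) j * t j - cn) →
      (cn - c') / (1 - ρstar) ≤ ∑ j, F (Fin.last n) j * t j) := by
  have : NeZero n := ⟨hn.ne'⟩
  obtain rfl : TP = truePositive F := funext hTP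
  obtain rfl : FP = falsePositive F := funext hFP
  obtain rfl : ρ = ratioRisk F := funext hρ
  obtain rfl : tStar = ((cn - c') / (truePositive F ψStar - falsePositive F ψStar)) • ψStar :=
    funext htStar
  subst hρstar
  have hψStar : falsePositive F ψStar < truePositive F ψStar := by
    rwa [ratioRisk, div_lt_one hψStarTP] at hρlt
  refine ⟨implementsLastUniform_smul F hcn.le hψStar,
    truePositive_smul_eq_div_one_sub_ratioRisk F _ hψStarTP hψStar, fun t ht himp => ?_⟩
  have hTP := truePositive_pos_of_implementsLastUniform F hFnonneg hcn ht himp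
  obtain ⟨B, hB, hbox⟩ := exists_pos_smul_mem_unitBox ht
  have hmin : ratioRisk F ψStar ≤ ratioRisk F t := by
    rw [← ratioRisk_smul F hB t]
    exact hψStarMin _ hbox (by rw [truePositive_smul]; positivity)
  exact div_one_sub_le_of_le_one_sub_div hTP hρlt
    (hmin.trans (ratioRisk_le_one_sub_div_of_implementsLastUniform F hTP himp))

/-- Min-pay optimality in uniform-cost settings: scaling the minimax
ratio-optimal test yields the min-pay contract, with expected payment
`(c_n - c')/(1 - ρ*)`. -/
theorem min_pay_uniform_cost_statistical_contract
    (n m : ℕ) (hn : 0 < n) (hm : 0 < m)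
    (F : Fin (n + 1) → Fin m → ℝ)
    (hFnonneg : ∀ i j, 0 ≤ F i j)
    (hFsum : ∀ i, ∑ j, F i j = 1)
    (c' cn : ℝ) (hc' : 0 ≤ c') (hcn : c' < cn)
    (TP : (Fin m → ℝ) → ℝ)
    (hTP : ∀ ψ, TP ψ = ∑ j, F (Fin.last n) j * ψ j)
    (FP : (Fin m → ℝ) → ℝ)
    (hFP : ∀ ψ, FP ψ = Finset.univ.sup' ⟨(⟨0, hn⟩ : Fin n), Finset.mem_univ _⟩
      (fun i : Fin n => ∑ j, F i.castSucc j * ψ j))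
    (ρ : (Fin m → ℝ) → ℝ)
    (hρ : ∀ ψ, ρ ψ = FP ψ / TP ψ)
    (ψStar : Fin m → ℝ)
    (hψStarBox : ∀ j, 0 ≤ ψStar j ∧ ψStar j ≤ 1)
    (hψStarTP : 0 < TP ψStar)
    (hψStarMin : ∀ ψ : Fin m → ℝ, (∀ j, 0 ≤ ψ j ∧ ψ j ≤ 1) → 0 < TP ψ →
      ρ ψStar ≤ ρ ψ)
    (ρstar : ℝ) (hρstar : ρstar = ρ ψStar) (hρlt : ρstar < 1)
    (tStar : Fin m → ℝ)
    (htStar : ∀ j, tStar j = (cn - c') / (TP ψStar - FP ψStar) * ψStar j) :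
    (∀ i, i ≠ Fin.last n →
      ∑ j, F i j * tStar j - c' ≤ ∑ j, F (Fin.last n) j * tStar j - cn) ∧
    (∑ j, F (Fin.last n) j * tStar j = (cn - c') / (1 - ρstar)) ∧
    (∀ t : Fin m → ℝ, (∀ j, 0 ≤ t j) →
      (∀ i, i ≠ Fin.last n →
        ∑ j, F i j * t j - c' ≤ ∑ j, F (Fin.last n) j * t j - cn) →
      (cn - c') / (1 - ρstar) ≤ ∑ j, F (Fin.last n) j * t j) :=
  min_pay_uniform_cost_statistical_contract_general n m hn F hFnonneg c' cn hcn TP hTP FP hFP ρ hρ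
    ψStar hψStarTP hψStarMin ρstar hρstar hρlt tStar htStar
end

section
/- Let F be an n×m row-stochastic matrix, b > 0, and let C_b be the set of nondecreasing cost vectors c ∈ ℝ_{≥0}^n with c_n − c_1 ≤ b. A contract t is b-cost-robust if it implements action n for every c ∈ C_b. Then t is b-cost-robust if and only if t implements action n for the single cost vector c^0 = (0,…,0,b). -/
/-- `u i` is the expected payment `∑ j, F i j * t j` of action `i`; the contract implements the
target action `Fin.last n` when no other action gives the agent a higher utility `u i - c i`. -/
def ImplementsLast {n : ℕ} (u c : Fin (n + 1) → ℝ) : Prop :=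
  ∀ i, i ≠ Fin.last n → u i - c i ≤ u (Fin.last n) - c (Fin.last n)

/-- The cost vector `c⁰ = (0, …, 0, b)`. -/
def extremeCost (n : ℕ) (b : ℝ) : Fin (n + 1) → ℝ :=
  fun i => if i = Fin.last n then b else 0

namespace extremeCost

variable {n : ℕ} {b : ℝ}

@[simp]
lemma apply_last : extremeCost n b (Fin.last n) = b := if_pos rfl

@[simp]
lemma apply_of_ne_last {i : Fin (n + 1)} (hi : i ≠ Fin.last n) : extremeCost n b i = 0 :=
  if_neg hi

lemma nonneg (hb : 0 ≤ b) (i : Fin (n + 1)) : 0 ≤ extremeCost n b i := by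
  unfold extremeCost
  split_ifs
  exacts [hb, le_rfl]

lemma monotone (hb : 0 ≤ b) : Monotone (extremeCost n b) := by
  intro i k hik
  by_cases hk : k = Fin.last n
  · rw [hk, apply_last]
    by_cases hi : i = Fin.last n
    · simp [hi]
    · simpa [hi] using hb
  · have hi : i ≠ Fin.last n := fun hi => hk (Fin.last_le_iff.mp (hi ▸ hik))
    simp [hi, hk]

lemma last_sub_zero_le (hb : 0 ≤ b) : extremeCost n b (Fin.last n) - extremeCost n b 0 ≤ b := by
  linarith [nonneg hb (n := n) 0, apply_last (n := n) (b := b)]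

lemma implementsLast_iff {u : Fin (n + 1) → ℝ} :
    ImplementsLast u (extremeCost n b) ↔ ∀ i, i ≠ Fin.last n → u i - 0 ≤ u (Fin.last n) - b := by
  refine forall₂_congr fun i hi => ?_
  rw [apply_of_ne_last hi, apply_last]

end extremeCost

/-- For monotone `c` of spread at most `b`, the last action costs at most `b` more than any other,
which is exactly the cost gap `c⁰` imposes. -/
lemma ImplementsLast.of_extremeCost {n : ℕ} {b : ℝ} {u c : Fin (n + 1) → ℝ}
    (h : ImplementsLast u (extremeCost n b)) (hc : Monotone c)
    (hcb : c (Fin.last n) - c 0 ≤ b) : ImplementsLast u c := by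
  intro i hi
  have hspread : c (Fin.last n) - c i ≤ b := by linarith [hc (Fin.zero_le i)]
  have hgap := extremeCost.implementsLast_iff.mp h i hi
  linarith

theorem cost_robust_iff_extreme_cost_vector_general
    (n m : ℕ)
    (F : Fin (n + 1) → Fin m → ℝ)
    (b : ℝ) (hb : 0 < b)
    (t : Fin m → ℝ) :
    (∀ c : Fin (n + 1) → ℝ, (∀ i, 0 ≤ c i) → Monotone c →
      c (Fin.last n) - c 0 ≤ b →
      (∀ i, i ≠ Fin.last n →
        ∑ j, F i j * t j - c i ≤ ∑ j, F (Fin.last n) j * t j - c (Fin.last n))) ↔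
    (∀ i, i ≠ Fin.last n →
      ∑ j, F i j * t j - 0 ≤ ∑ j, F (Fin.last n) j * t j - b) := by
  set u : Fin (n + 1) → ℝ := fun i => ∑ j, F i j * t j
  rw [← extremeCost.implementsLast_iff (u := u)]
  constructor
  · intro hrobust
    exact hrobust _ (extremeCost.nonneg hb.le) (extremeCost.monotone hb.le)
      (extremeCost.last_sub_zero_le hb.le)
  · intro hextreme c _ hc hcb
    exact hextreme.of_extremeCost hc hcb

/-- A contract is `b`-cost-robust iff it implements the target action for the
single cost vector `c^0 = (0, …, 0, b)`. -/
theorem cost_robust_iff_extreme_cost_vector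
    (n m : ℕ)
    (F : Fin (n + 1) → Fin m → ℝ)
    (hFnonneg : ∀ i j, 0 ≤ F i j)
    (hFsum : ∀ i, ∑ j, F i j = 1)
    (b : ℝ) (hb : 0 < b)
    (t : Fin m → ℝ) (ht : ∀ j, 0 ≤ t j) :
    (∀ c : Fin (n + 1) → ℝ, (∀ i, 0 ≤ c i) → Monotone c →
      c (Fin.last n) - c 0 ≤ b →
      (∀ i, i ≠ Fin.last n →
        ∑ j, F i j * t j - c i ≤ ∑ j, F (Fin.last n) j * t j - c (Fin.last n))) ↔
    (∀ i, i ≠ Fin.last n →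
      ∑ j, F i j * t j - 0 ≤ ∑ j, F (Fin.last n) j * t j - b) :=
  cost_robust_iff_extreme_cost_vector_general n m F b hb t
end

section
/- The approximation ratio b/a in the preceding statement is tight: for the 3-action, 2-outcome setting F_1 = (1,0), F_2 = (ε, 1−ε), F_3 = (0,1) with costs c_1 < c_2 < c_3 and 0 < ε < (c_3 − c_2)/(c_3 − c_1), the minimum budget among contracts implementing action 3 is (c_3 − c_2)/ε, while the minimum-budget (c_3 − c_1)-cost-robust contract has budget (c_3 − c_1)/ε, so the ratio is exactly (c_3 − c_1)/(c_3 − c_2). -/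
/-!
Only outcome 2 separates action 2 from action 3, with likelihood gap `ε`, so the incentive
constraint against action 2 reads `ε * (t1 - t0) ≥ c3 - c2` and every implementing contract pays
at least `(c3 - c2) / ε` on outcome 2. Paying exactly that and nothing on outcome 1 also beats
action 1 because `ε * (c3 - c1) < c3 - c2`. For robustness, the admissible cost vector
`(0, 0, c3 - c1)` forces `ε * (t1 - t0) ≥ c3 - c1`; conversely `(0, (c3 - c1) / ε)` is robust since
`ε ≤ 1` and every admissible `c'` has `c' 2 - c' 1 ≤ c' 2 - c' 0 ≤ c3 - c1`.
-/

lemma div_le_of_le_mul_sub {ε a t0 t1 : ℝ} (hε : 0 < ε) (ht0 : 0 ≤ t0)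
    (h : a ≤ ε * (t1 - t0)) : a / ε ≤ t1 := by
  rw [div_le_iff₀ hε]
  nlinarith

lemma implements_zero_div {ε c1 c2 c3 : ℝ} (hε : 0 < ε) (hεc : ε * (c3 - c1) ≤ c3 - c2) :
    (0 - c1 ≤ (c3 - c2) / ε - c3) ∧
      ε * 0 + (1 - ε) * ((c3 - c2) / ε) - c2 ≤ (c3 - c2) / ε - c3 := by
  have hpay : ε * ((c3 - c2) / ε) = c3 - c2 := mul_div_cancel₀ _ hε.ne'
  have hbound : c3 - c1 ≤ (c3 - c2) / ε := by rw [le_div_iff₀ hε]; linarith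
  constructor <;> linarith

lemma costRobust_zero_div {ε b : ℝ} (hε : 0 < ε) (hε1 : ε ≤ 1) (hb : 0 ≤ b)
    (c' : Fin 3 → ℝ) (hc' : Monotone c') (hcb : c' 2 - c' 0 ≤ b) :
    (0 - c' 0 ≤ b / ε - c' 2) ∧ ε * 0 + (1 - ε) * (b / ε) - c' 1 ≤ b / ε - c' 2 := by
  have hpay : ε * (b / ε) = b := mul_div_cancel₀ _ hε.ne'
  have hbound : b ≤ b / ε := le_div_self hb hε hε1
  have h01 : c' 0 ≤ c' 1 := hc' (by decide)
  constructor <;> linarith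

lemma monotone_vec_zero_zero {b : ℝ} (hb : 0 ≤ b) : Monotone (![0, 0, b] : Fin 3 → ℝ) := by
  rw [Fin.monotone_iff_le_succ]
  intro i
  fin_cases i <;> simp [hb]

theorem approximation_ratio_tight_general
    (c1 c2 c3 : ℝ) (h12 : c1 < c2) (h23 : c2 < c3)
    (ε : ℝ) (hε : 0 < ε) (hεlt : ε < (c3 - c2) / (c3 - c1)) :
    (sInf {B : ℝ | ∃ t0 t1 : ℝ, 0 ≤ t0 ∧ 0 ≤ t1 ∧
        (t0 - c1 ≤ t1 - c3) ∧
        (ε * t0 + (1 - ε) * t1 - c2 ≤ t1 - c3) ∧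
        B = max t0 t1} = (c3 - c2) / ε) ∧
    (sInf {B : ℝ | ∃ t0 t1 : ℝ, 0 ≤ t0 ∧ 0 ≤ t1 ∧
        (∀ c' : Fin 3 → ℝ, (∀ i, 0 ≤ c' i) → Monotone c' →
          c' 2 - c' 0 ≤ c3 - c1 →
          (t0 - c' 0 ≤ t1 - c' 2) ∧
          (ε * t0 + (1 - ε) * t1 - c' 1 ≤ t1 - c' 2)) ∧
        B = max t0 t1} = (c3 - c1) / ε) ∧
    ((c3 - c1) / ε) / ((c3 - c2) / ε) = (c3 - c1) / (c3 - c2) := by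
  have h13 : 0 < c3 - c1 := by linarith
  have hεc : ε * (c3 - c1) < c3 - c2 := (lt_div_iff₀ h13).mp hεlt
  have hε1 : ε ≤ 1 := (hεlt.trans ((div_lt_one h13).mpr (by linarith))).le
  have h23' : 0 ≤ (c3 - c2) / ε := div_nonneg (by linarith) hε.le
  have h13' : 0 ≤ (c3 - c1) / ε := div_nonneg h13.le hε.le
  refine ⟨IsLeast.csInf_eq ⟨?_, ?_⟩, IsLeast.csInf_eq ⟨?_, ?_⟩,
    div_div_div_cancel_right₀ hε.ne' _ _⟩
  · obtain ⟨h1, h2⟩ := implements_zero_div hε hεc.le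
    exact ⟨0, _, le_rfl, h23', h1, h2, (max_eq_right h23').symm⟩
  · rintro _ ⟨t0, t1, ht0, -, -, h2, rfl⟩
    exact le_max_of_le_right (div_le_of_le_mul_sub hε ht0 (by linarith))
  · exact ⟨0, _, le_rfl, h13', fun c' _ hc' hcb => costRobust_zero_div hε hε1 h13.le c' hc' hcb,
      (max_eq_right h13').symm⟩
  · rintro _ ⟨t0, t1, ht0, -, hrobust, rfl⟩
    have hnonneg : ∀ i, 0 ≤ (![0, 0, c3 - c1] : Fin 3 → ℝ) i := by
      intro i; fin_cases i <;> simp [h13.le]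
    obtain ⟨-, h2⟩ := hrobust _ hnonneg (monotone_vec_zero_zero h13.le) (by simp)
    simp only [Matrix.cons_val_zero, Matrix.cons_val_one, Matrix.cons_val_two, Matrix.head_cons,
      Matrix.tail_cons] at h2
    exact le_max_of_le_right (div_le_of_le_mul_sub hε ht0 (by linarith))

/-- Tightness of the `b/a` approximation ratio: in the 3-action, 2-outcome
setting `F₁ = (1,0)`, `F₂ = (ε, 1-ε)`, `F₃ = (0,1)` with
`ε < (c₃-c₂)/(c₃-c₁)`, the optimal budget is `(c₃-c₂)/ε` while the optimal
`(c₃-c₁)`-cost-robust budget is `(c₃-c₁)/ε`. -/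
theorem approximation_ratio_tight
    (c1 c2 c3 : ℝ) (hc1 : 0 ≤ c1) (h12 : c1 < c2) (h23 : c2 < c3)
    (ε : ℝ) (hε : 0 < ε) (hεlt : ε < (c3 - c2) / (c3 - c1)) :
    (sInf {B : ℝ | ∃ t0 t1 : ℝ, 0 ≤ t0 ∧ 0 ≤ t1 ∧
        (t0 - c1 ≤ t1 - c3) ∧
        (ε * t0 + (1 - ε) * t1 - c2 ≤ t1 - c3) ∧
        B = max t0 t1} = (c3 - c2) / ε) ∧
    (sInf {B : ℝ | ∃ t0 t1 : ℝ, 0 ≤ t0 ∧ 0 ≤ t1 ∧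
        (∀ c' : Fin 3 → ℝ, (∀ i, 0 ≤ c' i) → Monotone c' →
          c' 2 - c' 0 ≤ c3 - c1 →
          (t0 - c' 0 ≤ t1 - c' 2) ∧
          (ε * t0 + (1 - ε) * t1 - c' 1 ≤ t1 - c' 2)) ∧
        B = max t0 t1} = (c3 - c1) / ε) ∧
    ((c3 - c1) / ε) / ((c3 - c2) / ε) = (c3 - c1) / (c3 - c2) :=
  approximation_ratio_tight_general c1 c2 c3 h12 h23 ε hε hεlt
end

section
/- Let F be an n×m row-stochastic matrix with n ≥ 2 and b > 0. Assume action n is implementable for the cost vector c^0 = (0,…,0,b). Then the minimum budget of a b-cost-robust contract equals max over distributions λ ∈ Δ([n−1]) of b / TV(F_n, Σ_{i<n} λ_i F_i), where TV denotes total variation distance. -/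
/-!
Write `A` for the matrix with rows `F_n - F_i` (`i < n`). Cost-robustness only has to be checked
at the extreme cost vector `c⁰ = (0, …, 0, b)`, where it says `A t ≥ b` componentwise. Averaging
these inequalities with weights `λ ∈ Δ` gives `b ≤ (λᵀ A) t ≤ TV(λ) · max t`, since `TV(λ)` is the
positive mass of `λᵀ A`; this is the lower bound. For the upper bound, apply the von Neumann
minimax theorem to the bilinear game `λᵀ A s` on `Δ × [0,1]^m`: against a fixed `λ` the best
response in the box has value exactly `TV(λ)`, so a saddle point `(λ*, s*)` has `λ*` minimizing
`TV` and `A s* ≥ TV(λ*)` componentwise, and `t = (b / TV(λ*)) s*` is a robust contract of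
budget `b / TV(λ*)`.
-/

open Finset Matrix

section Minimax

variable {ι κ : Type*} [Fintype ι] [Fintype κ]

/-- For `a = gapMatrix F` and `lam ∈ Δ([n-1])` this is `TV(F_n, Σ λ_i F_i)`. -/
def sumPosPart (a : Matrix ι κ ℝ) (lam : ι → ℝ) : ℝ := ∑ j, max ((lam ᵥ* a) j) 0

variable (a : Matrix ι κ ℝ) {lam : ι → ℝ}

lemma sumPosPart_nonneg : 0 ≤ sumPosPart a lam :=
  sum_nonneg fun _ _ => le_max_right _ _

lemma dotProduct_le_sumPosPart_mul {s : κ → ℝ} {M : ℝ} (hs0 : ∀ j, 0 ≤ s j)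
    (hsM : ∀ j, s j ≤ M) : (lam ᵥ* a) ⬝ᵥ s ≤ sumPosPart a lam * M := by
  rw [sumPosPart, sum_mul]
  refine sum_le_sum fun j _ => ?_
  calc (lam ᵥ* a) j * s j ≤ max ((lam ᵥ* a) j) 0 * s j :=
        mul_le_mul_of_nonneg_right (le_max_left _ _) (hs0 j)
    _ ≤ max ((lam ᵥ* a) j) 0 * M := mul_le_mul_of_nonneg_left (hsM j) (le_max_right _ _)

lemma exists_mem_Icc_dotProduct_eq_sumPosPart :
    ∃ s ∈ Set.Icc (0 : κ → ℝ) 1, (lam ᵥ* a) ⬝ᵥ s = sumPosPart a lam := by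
  refine ⟨fun j => if 0 ≤ (lam ᵥ* a) j then 1 else 0, ⟨fun j => ?_, fun j => ?_⟩,
    sum_congr rfl fun j _ => ?_⟩ <;> dsimp only <;> split_ifs with h <;> simp_all [le_of_lt]

lemma exists_isSaddlePointOn_dotProduct_mulVec [Nonempty ι] :
    ∃ lam ∈ stdSimplex ℝ ι, ∃ s ∈ Set.Icc (0 : κ → ℝ) 1,
      IsSaddlePointOn (stdSimplex ℝ ι) (Set.Icc 0 1) (fun x y => x ⬝ᵥ (a *ᵥ y)) lam s := by
  let pairing (y : κ → ℝ) : (ι → ℝ) →ₗ[ℝ] ℝ := (dotProductBilin ℝ ℝ).flip (a *ᵥ y)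
  let payoff (x : ι → ℝ) : (κ → ℝ) →ₗ[ℝ] ℝ := (dotProductBilin ℝ ℝ x).comp a.mulVecLin
  exact Sion.exists_isSaddlePointOn (isPathConnected_stdSimplex ι).nonempty
    (convex_stdSimplex ℝ ι) (isCompact_stdSimplex ℝ ι)
    (fun y _ => (pairing y).continuous_of_finiteDimensional.continuousOn.lowerSemicontinuousOn)
    (fun y _ => ((pairing y).convexOn (convex_stdSimplex ℝ ι)).quasiconvexOn)
    (convex_Icc 0 1) ⟨0, le_rfl, zero_le_one⟩ isCompact_Icc
    (fun x _ => (payoff x).continuous_of_finiteDimensional.continuousOn.upperSemicontinuousOn)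
    (fun x _ => ((payoff x).concaveOn (convex_Icc 0 1)).quasiconcaveOn)

lemma exists_isMinOn_sumPosPart_le_mulVec [Nonempty ι] :
    ∃ lam ∈ stdSimplex ℝ ι, IsMinOn (sumPosPart a) (stdSimplex ℝ ι) lam ∧
      ∃ s ∈ Set.Icc (0 : κ → ℝ) 1, ∀ i, sumPosPart a lam ≤ (a *ᵥ s) i := by
  classical
  obtain ⟨lam, hlam, s, hs, hsaddle⟩ := exists_isSaddlePointOn_dotProduct_mulVec a
  obtain ⟨s', hs', hs'eq⟩ := exists_mem_Icc_dotProduct_eq_sumPosPart a (lam := lam)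
  have hvalue : ∀ x ∈ stdSimplex ℝ ι, sumPosPart a lam ≤ x ⬝ᵥ (a *ᵥ s) := fun x hx => by
    simpa only [← hs'eq, dotProduct_mulVec] using hsaddle x hx s' hs'
  refine ⟨lam, hlam, fun x hx => ?_, s, hs, fun i => ?_⟩
  · calc sumPosPart a lam ≤ x ⬝ᵥ (a *ᵥ s) := hvalue x hx
      _ = (x ᵥ* a) ⬝ᵥ s := dotProduct_mulVec x a s
      _ ≤ sumPosPart a x * 1 :=
        dotProduct_le_sumPosPart_mul a (fun j => hs.1 j) (fun j => hs.2 j)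
      _ = sumPosPart a x := mul_one _
  · simpa only [single_one_dotProduct] using hvalue _ (single_mem_stdSimplex ℝ i)

end Minimax

section Budget

variable {ι κ : Type*} [Fintype ι] [Fintype κ] [Nonempty κ]

def feasibleBudgets (a : Matrix ι κ ℝ) (b : ℝ) : Set ℝ :=
  {B | ∃ t : κ → ℝ, (∀ j, 0 ≤ t j) ∧ (∀ i, b ≤ (a *ᵥ t) i) ∧ B = univ.sup' univ_nonempty t}

variable {a : Matrix ι κ ℝ} {b : ℝ} {lam : ι → ℝ}

lemma le_sumPosPart_mul_of_mem_feasibleBudgets (hlam : lam ∈ stdSimplex ℝ ι) {B : ℝ}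
    (hB : B ∈ feasibleBudgets a b) : b ≤ sumPosPart a lam * B := by
  obtain ⟨t, ht0, hbt, rfl⟩ := hB
  calc b = ∑ i, lam i * b := by rw [← sum_mul, hlam.2, one_mul]
    _ ≤ lam ⬝ᵥ (a *ᵥ t) := sum_le_sum fun i _ => mul_le_mul_of_nonneg_left (hbt i) (hlam.1 i)
    _ = (lam ᵥ* a) ⬝ᵥ t := dotProduct_mulVec lam a t
    _ ≤ _ := dotProduct_le_sumPosPart_mul a ht0 fun j => le_sup' t (mem_univ j)

lemma sumPosPart_pos (hb : 0 < b) (hlam : lam ∈ stdSimplex ℝ ι) {B : ℝ}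
    (hB : B ∈ feasibleBudgets a b) : 0 < sumPosPart a lam := by
  refine (sumPosPart_nonneg a).lt_of_ne fun h => ?_
  have := le_sumPosPart_mul_of_mem_feasibleBudgets hlam hB
  rw [← h, zero_mul] at this
  exact this.not_gt hb

lemma isLeast_feasibleBudgets (hb : 0 ≤ b) (hlam : lam ∈ stdSimplex ℝ ι)
    (hT : 0 < sumPosPart a lam) {s : κ → ℝ} (hs : s ∈ Set.Icc 0 1)
    (hsT : ∀ i, sumPosPart a lam ≤ (a *ᵥ s) i) :
    IsLeast (feasibleBudgets a b) (b / sumPosPart a lam) := by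
  have lower : b / sumPosPart a lam ∈ lowerBounds (feasibleBudgets a b) := fun B hB =>
    (div_le_iff₀' hT).2 (le_sumPosPart_mul_of_mem_feasibleBudgets hlam hB)
  set t := (b / sumPosPart a lam) • s
  have hscale : 0 ≤ b / sumPosPart a lam := div_nonneg hb hT.le
  have ht : univ.sup' univ_nonempty t ∈ feasibleBudgets a b := by
    refine ⟨t, fun j => smul_nonneg hscale (hs.1 j), fun i => ?_, rfl⟩
    calc b = b / sumPosPart a lam * sumPosPart a lam := (div_mul_cancel₀ b hT.ne').symm
      _ ≤ b / sumPosPart a lam * (a *ᵥ s) i := mul_le_mul_of_nonneg_left (hsT i) hscale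
      _ = (a *ᵥ t) i := by rw [mulVec_smul, Pi.smul_apply, smul_eq_mul]
  have hle : univ.sup' univ_nonempty t ≤ b / sumPosPart a lam :=
    sup'_le _ _ fun j _ => mul_le_of_le_one_right hscale (hs.2 j)
  exact ⟨le_antisymm hle (lower ht) ▸ ht, lower⟩

end Budget

section Contract

variable {n m : ℕ}

def gapMatrix (F : Fin (n + 1) → Fin m → ℝ) : Matrix (Fin n) (Fin m) ℝ :=
  of fun i j => F (Fin.last n) j - F i.castSucc j

def IsCostRobust (F : Fin (n + 1) → Fin m → ℝ) (b : ℝ) (t : Fin m → ℝ) : Prop :=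
  ∀ c : Fin (n + 1) → ℝ, (∀ i, 0 ≤ c i) → Monotone c → c (Fin.last n) - c 0 ≤ b →
    ∀ i, i ≠ Fin.last n →
      ∑ j, F i j * t j - c i ≤ ∑ j, F (Fin.last n) j * t j - c (Fin.last n)

variable {F : Fin (n + 1) → Fin m → ℝ} {b : ℝ} {t : Fin m → ℝ}

lemma forall_le_gapMatrix_mulVec_iff :
    (∀ i, b ≤ (gapMatrix F *ᵥ t) i) ↔
      ∀ i, i ≠ Fin.last n → ∑ j, F i j * t j ≤ ∑ j, F (Fin.last n) j * t j - b := by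
  have hgap (i : Fin n) : (gapMatrix F *ᵥ t) i =
      ∑ j, F (Fin.last n) j * t j - ∑ j, F i.castSucc j * t j := by
    simp only [mulVec, dotProduct, gapMatrix, of_apply, sub_mul, sum_sub_distrib]
  refine ⟨fun h i hi => ?_, fun h i => ?_⟩
  · obtain ⟨i, rfl⟩ := Fin.exists_castSucc_eq.2 hi
    linarith [h i, hgap i]
  · linarith [h i.castSucc (Fin.castSucc_ne_last i), hgap i]

lemma isCostRobust_iff (hn : 0 < n) (hb : 0 ≤ b) :
    IsCostRobust F b t ↔
      ∀ i, i ≠ Fin.last n → ∑ j, F i j * t j ≤ ∑ j, F (Fin.last n) j * t j - b := by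
  refine ⟨fun h i hi => ?_, fun h c _ hc hcb i hi => ?_⟩
  · have hmono : Monotone fun k : Fin (n + 1) => if k = Fin.last n then b else 0 := by
      intro k l hkl
      by_cases hk : k = Fin.last n
      · simp [hk, Fin.last_le_iff.1 (hk ▸ hkl)]
      · simp only [hk, if_false]
        split_ifs <;> simp [hb]
    have h0 : (0 : Fin (n + 1)) ≠ Fin.last n := Fin.ne_of_val_ne hn.ne
    simpa [hi, h0] using h _ (fun k => by split_ifs <;> simp [hb]) hmono
      (by simp [h0]) i hi
  · linarith [h i hi, hc (Fin.zero_le i)]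

lemma sumPosPart_gapMatrix {lam : Fin n → ℝ} (hlam : ∑ i, lam i = 1) :
    sumPosPart (gapMatrix F) lam =
      ∑ j, max (F (Fin.last n) j - ∑ i, lam i * F i.castSucc j) 0 := by
  simp only [sumPosPart, vecMul, dotProduct, gapMatrix, of_apply, mul_sub, sum_sub_distrib,
    ← sum_mul, hlam, one_mul]

lemma feasibleBudgets_gapMatrix (hn : 0 < n) (hb : 0 ≤ b) [Nonempty (Fin m)] :
    {B | ∃ t, (∀ j, 0 ≤ t j) ∧ IsCostRobust F b t ∧ B = univ.sup' univ_nonempty t} =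
      feasibleBudgets (gapMatrix F) b := by
  ext B
  refine exists_congr fun t => and_congr_right fun _ => and_congr_left' ?_
  rw [isCostRobust_iff hn hb, forall_le_gapMatrix_mulVec_iff]

end Contract

theorem cost_robust_budget_eq_max_inv_tv_general
    (n m : ℕ) (hn : 0 < n) (hm : 0 < m)
    (F : Fin (n + 1) → Fin m → ℝ)
    (b : ℝ) (hb : 0 < b)
    (hfeas : ∃ t : Fin m → ℝ, (∀ j, 0 ≤ t j) ∧
      (∀ i, i ≠ Fin.last n →
        ∑ j, F i j * t j - 0 ≤ ∑ j, F (Fin.last n) j * t j - b))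
    (Brob : ℝ)
    (hBrob : Brob = sInf {B : ℝ | ∃ t : Fin m → ℝ, (∀ j, 0 ≤ t j) ∧
      (∀ c : Fin (n + 1) → ℝ, (∀ i, 0 ≤ c i) → Monotone c →
        c (Fin.last n) - c 0 ≤ b →
        (∀ i, i ≠ Fin.last n →
          ∑ j, F i j * t j - c i ≤
            ∑ j, F (Fin.last n) j * t j - c (Fin.last n))) ∧
      B = Finset.univ.sup' ⟨(⟨0, hm⟩ : Fin m), Finset.mem_univ _⟩ t}) :
    ∃ lam : Fin n → ℝ, (∀ i, 0 ≤ lam i) ∧ (∑ i, lam i = 1) ∧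
      Brob = b / (∑ j, max (F (Fin.last n) j - ∑ i, lam i * F i.castSucc j) 0) ∧
      ∀ lam' : Fin n → ℝ, (∀ i, 0 ≤ lam' i) → (∑ i, lam' i = 1) →
        b / (∑ j, max (F (Fin.last n) j - ∑ i, lam' i * F i.castSucc j) 0) ≤ Brob := by
  have : Nonempty (Fin n) := ⟨⟨0, hn⟩⟩
  have : Nonempty (Fin m) := ⟨⟨0, hm⟩⟩
  obtain ⟨lam, hlam, hmin, s, hs, hsT⟩ := exists_isMinOn_sumPosPart_le_mulVec (gapMatrix F)
  have hBrob' : Brob = sInf (feasibleBudgets (gapMatrix F) b) := by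
    rw [← feasibleBudgets_gapMatrix hn hb.le]
    exact hBrob
  obtain ⟨t, ht0, ht⟩ := hfeas
  have hT : 0 < sumPosPart (gapMatrix F) lam := sumPosPart_pos hb hlam
    ⟨t, ht0, forall_le_gapMatrix_mulVec_iff.2 (by simpa only [sub_zero] using ht), rfl⟩
  have hBrobT : Brob = b / sumPosPart (gapMatrix F) lam :=
    hBrob' ▸ (isLeast_feasibleBudgets hb.le hlam hT hs hsT).csInf_eq
  refine ⟨lam, hlam.1, hlam.2, ?_, fun lam' hlam'0 hlam'1 => ?_⟩
  · rw [hBrobT, sumPosPart_gapMatrix hlam.2]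
  · rw [hBrobT, ← sumPosPart_gapMatrix hlam'1]
    exact div_le_div_of_nonneg_left hb.le hT (hmin ⟨hlam'0, hlam'1⟩)

/-- Distribution distance determines budget: the minimum budget of a
`b`-cost-robust contract equals
`max_{λ ∈ Δ([n-1])} b / TV(F_n, Σ_{i<n} λ_i F_i)`. -/
theorem cost_robust_budget_eq_max_inv_tv
    (n m : ℕ) (hn : 0 < n) (hm : 0 < m)
    (F : Fin (n + 1) → Fin m → ℝ)
    (hFnonneg : ∀ i j, 0 ≤ F i j)
    (hFsum : ∀ i, ∑ j, F i j = 1)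
    (b : ℝ) (hb : 0 < b)
    (hfeas : ∃ t : Fin m → ℝ, (∀ j, 0 ≤ t j) ∧
      (∀ i, i ≠ Fin.last n →
        ∑ j, F i j * t j - 0 ≤ ∑ j, F (Fin.last n) j * t j - b))
    (Brob : ℝ)
    (hBrob : Brob = sInf {B : ℝ | ∃ t : Fin m → ℝ, (∀ j, 0 ≤ t j) ∧
      (∀ c : Fin (n + 1) → ℝ, (∀ i, 0 ≤ c i) → Monotone c →
        c (Fin.last n) - c 0 ≤ b →
        (∀ i, i ≠ Fin.last n →
          ∑ j, F i j * t j - c i ≤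
            ∑ j, F (Fin.last n) j * t j - c (Fin.last n))) ∧
      B = Finset.univ.sup' ⟨(⟨0, hm⟩ : Fin m), Finset.mem_univ _⟩ t}) :
    ∃ lam : Fin n → ℝ, (∀ i, 0 ≤ lam i) ∧ (∑ i, lam i = 1) ∧
      Brob = b / (∑ j, max (F (Fin.last n) j - ∑ i, lam i * F i.castSucc j) 0) ∧
      ∀ lam' : Fin n → ℝ, (∀ i, 0 ≤ lam' i) → (∑ i, lam' i = 1) →
        b / (∑ j, max (F (Fin.last n) j - ∑ i, lam' i * F i.castSucc j) 0) ≤ Brob :=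
  cost_robust_budget_eq_max_inv_tv_general n m hn hm F b hb hfeas Brob hBrob
end

section
/- Let F be an n×m row-stochastic matrix with strictly positive entries satisfying the monotone likelihood ratio property: F_{i,j}/F_{i',j} is nondecreasing in j for all i > i'. Then any test ψ ∈ [0,1]^m minimizing the composite risk R(ψ) = max_{i<n}(Σ_j F_{ij}ψ_j + Σ_j F_{nj}(1−ψ_j)) can be taken to be a deterministic threshold test: there exists j_0 ∈ [m] such that ψ(j) = 1 if j ≥ j_0 and ψ(j) = 0 otherwise, achieving the minimal risk. -/
/-!
Let `μ` be the last null row and `ν` the alternative. The set `{j | F μ j ≤ F ν j}` is nonempty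
(both rows sum to one) and, by MLR, an upper set, so it is `{j | j₀ ≤ j}`. The threshold test at
`j₀` is then the Neyman–Pearson test of `μ` against `ν`, hence minimises the risk against `μ`.
MLR also makes every earlier null row put at most as much mass on `{j | j₀ ≤ j}` as `μ`, so
against the threshold test the maximum over null rows is attained at `μ`.
-/

open Finset

section

variable {ι : Type*} [Fintype ι]

def testRisk (p q ψ : ι → ℝ) : ℝ :=
  ∑ j, p j * ψ j + ∑ j, q j * (1 - ψ j)

theorem testRisk_le_testRisk_of_sum_le {p p' q ψ : ι → ℝ}
    (h : ∑ j, p j * ψ j ≤ ∑ j, p' j * ψ j) : testRisk p q ψ ≤ testRisk p' q ψ :=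
  add_le_add_left h _

/-- Neyman–Pearson lemma. -/
theorem testRisk_ite_le (p q ψ : ι → ℝ) (P : ι → Prop) [DecidablePred P]
    (hP : ∀ j, P j → p j ≤ q j) (hnP : ∀ j, ¬ P j → q j ≤ p j)
    (hψ : ∀ j, 0 ≤ ψ j ∧ ψ j ≤ 1) :
    testRisk p q (fun j => if P j then 1 else 0) ≤ testRisk p q ψ := by
  unfold testRisk
  simp only [← sum_add_distrib]
  refine sum_le_sum fun j _ => ?_
  obtain ⟨hψ0, hψ1⟩ := hψ j
  by_cases hj : P j
  · have := hP j hj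
    simp only [if_pos hj]
    nlinarith
  · have := hnP j hj
    simp only [if_neg hj]
    nlinarith

variable [DecidableEq ι]

theorem sum_le_sum_of_mul_le_mul_compl {a b : ι → ℝ} (U : Finset ι)
    (ha : ∑ j, a j = 1) (hb : ∑ j, b j = 1)
    (hab : ∀ j ∈ U, ∀ k ∈ Uᶜ, b k * a j ≤ b j * a k) :
    ∑ j ∈ U, a j ≤ ∑ j ∈ U, b j := by
  have hcross : (∑ k ∈ Uᶜ, b k) * (∑ j ∈ U, a j) ≤ (∑ j ∈ U, b j) * (∑ k ∈ Uᶜ, a k) := by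
    simp only [sum_mul_sum]
    rw [sum_comm]
    exact sum_le_sum fun j hj => sum_le_sum fun k hk => hab j hj k hk
  have hca : ∑ k ∈ Uᶜ, a k = 1 - ∑ j ∈ U, a j := by
    rw [← ha, ← sum_add_sum_compl U a]; ring
  have hcb : ∑ k ∈ Uᶜ, b k = 1 - ∑ j ∈ U, b j := by
    rw [← hb, ← sum_add_sum_compl U b]; ring
  rw [hca, hcb] at hcross
  nlinarith

end

section

variable {ι : Type*} [Fintype ι] [LinearOrder ι]

def thresholdTest (j₀ : ι) : ι → ℝ :=
  fun j => if j₀ ≤ j then 1 else 0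

/-- Monotone likelihood ratio `b / a` gives first-order stochastic dominance of `a` by `b`. -/
theorem sum_mul_thresholdTest_le {a b : ι → ℝ} (ha : ∑ j, a j = 1) (hb : ∑ j, b j = 1)
    (hab : ∀ k j, k < j → b k * a j ≤ b j * a k) (j₀ : ι) :
    ∑ j, a j * thresholdTest j₀ j ≤ ∑ j, b j * thresholdTest j₀ j := by
  classical
  simp only [thresholdTest, mul_ite, mul_one, mul_zero, ← sum_filter]
  refine sum_le_sum_of_mul_le_mul_compl _ ha hb fun j hj k hk => hab k j ?_
  simp only [mem_compl, mem_filter, mem_univ, true_and, not_le] at hj hk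
  exact hk.trans_le hj

theorem exists_threshold_of_mlr {a b : ι → ℝ} (ha_pos : ∀ j, 0 < a j)
    (ha : ∑ j, a j = 1) (hb : ∑ j, b j = 1)
    (hab : ∀ k j, k < j → b k * a j ≤ b j * a k) :
    ∃ j₀, (∀ j, j₀ ≤ j → a j ≤ b j) ∧ (∀ j, ¬ j₀ ≤ j → b j ≤ a j) := by
  classical
  set T := univ.filter fun j => a j ≤ b j
  have hT : T.Nonempty := by
    by_contra hempty
    have hlt : ∀ j ∈ (univ : Finset ι), b j < a j := fun j _ => by
      by_contra hj
      exact hempty ⟨j, by simpa [T] using hj⟩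
    have hne : (univ : Finset ι).Nonempty := nonempty_of_sum_ne_zero (ha.trans_ne one_ne_zero)
    have := sum_lt_sum_of_nonempty hne hlt
    linarith
  refine ⟨T.min' hT, fun j hj => ?_, fun j hj => ?_⟩
  · have hmin : a (T.min' hT) ≤ b (T.min' hT) := (mem_filter.mp (T.min'_mem hT)).2
    rcases hj.eq_or_lt with rfl | hlt
    · exact hmin
    · have := hab _ _ hlt
      nlinarith [ha_pos (T.min' hT), ha_pos j]
  · by_contra hj'
    exact hj (T.min'_le j (by simpa [T] using le_of_not_ge hj'))

end

theorem mlr_threshold_test_optimal_general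
    (n m : ℕ) (hn : 0 < n)
    (F : Fin (n + 1) → Fin m → ℝ)
    (hFpos : ∀ i j, 0 < F i j)
    (hFsum : ∀ i, ∑ j, F i j = 1)
    (hMLR : ∀ (i i' : Fin (n + 1)) (j j' : Fin m), i' < i → j' < j →
      F i j * F i' j' ≥ F i j' * F i' j)
    (R : (Fin m → ℝ) → ℝ)
    (hR : ∀ ψ, R ψ = Finset.univ.sup' ⟨(⟨0, hn⟩ : Fin n), Finset.mem_univ _⟩
      (fun i : Fin n =>
        (∑ j, F i.castSucc j * ψ j) + (∑ j, F (Fin.last n) j * (1 - ψ j)))) :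
    ∃ j0 : Fin m,
      ∀ ψ : Fin m → ℝ, (∀ j, 0 ≤ ψ j ∧ ψ j ≤ 1) →
        R (fun j => if j0 ≤ j then (1 : ℝ) else 0) ≤ R ψ := by
  have hMLR_le : ∀ i i', i' ≤ i → ∀ k j, k < j → F i k * F i' j ≤ F i j * F i' k := by
    intro i i' hii' k j hkj
    rcases hii'.eq_or_lt with rfl | hlt
    · exact (mul_comm _ _).le
    · exact hMLR i i' j k hlt hkj
  set ν := Fin.last n
  set iμ : Fin n := ⟨n - 1, Nat.sub_lt hn one_pos⟩
  set μ := iμ.castSucc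
  have hμν : μ ≤ ν := Fin.castSucc_lt_last iμ |>.le
  have hμ_max (i : Fin n) : i.castSucc ≤ μ :=
    Fin.castSucc_le_castSucc_iff.mpr (Fin.le_def.mpr (Nat.le_sub_one_of_lt i.isLt))
  obtain ⟨j₀, hup, hdown⟩ :=
    exists_threshold_of_mlr (hFpos μ) (hFsum μ) (hFsum ν) (hMLR_le ν μ hμν)
  refine ⟨j₀, fun ψ hψ => ?_⟩
  simp only [hR]
  calc _ ≤ testRisk (F μ) (F ν) (thresholdTest j₀) :=
        sup'_le _ _ fun i _ => testRisk_le_testRisk_of_sum_le <|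
          sum_mul_thresholdTest_le (hFsum _) (hFsum _)
            (hMLR_le _ _ (hμ_max i)) j₀
    _ ≤ testRisk (F μ) (F ν) ψ := testRisk_ite_le _ _ ψ _ hup hdown hψ
    _ ≤ _ := le_sup' (fun i : Fin n => testRisk (F i.castSucc) (F ν) ψ) (mem_univ iμ)

/-- Under MLR, a deterministic threshold test achieves the minimal
composite risk `R(ψ) = max_{i<n}(FP_i + FN)`. -/
theorem mlr_threshold_test_optimal
    (n m : ℕ) (hn : 0 < n) (hm : 0 < m)
    (F : Fin (n + 1) → Fin m → ℝ)
    (hFpos : ∀ i j, 0 < F i j)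
    (hFsum : ∀ i, ∑ j, F i j = 1)
    (hMLR : ∀ (i i' : Fin (n + 1)) (j j' : Fin m), i' < i → j' < j →
      F i j * F i' j' ≥ F i j' * F i' j)
    (R : (Fin m → ℝ) → ℝ)
    (hR : ∀ ψ, R ψ = Finset.univ.sup' ⟨(⟨0, hn⟩ : Fin n), Finset.mem_univ _⟩
      (fun i : Fin n =>
        (∑ j, F i.castSucc j * ψ j) + (∑ j, F (Fin.last n) j * (1 - ψ j)))) :
    ∃ j0 : Fin m,
      ∀ ψ : Fin m → ℝ, (∀ j, 0 ≤ ψ j ∧ ψ j ≤ 1) →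
        R (fun j => if j0 ≤ j then (1 : ℝ) else 0) ≤ R ψ :=
  mlr_threshold_test_optimal_general n m hn F hFpos hFsum hMLR R hR
end

section
/- Consider a two-action (n = 2) contract setting with outcome distributions F_1, F_2 on [m], costs c_1 = 0 and c_2 = b > 0, where F_1 ≠ F_2. Then the minimum budget among contracts implementing action 2 equals b / TV(F_2, F_1), and is achieved by the contract t_j = (b/TV(F_2,F_1)) · 1[F_2(j) > F_1(j)]. -/
/-!
Write `Δ j = F₂ j - F₁ j`. A contract `t` implements action 2 exactly when `∑ Δ j t j ≥ b`.
If `0 ≤ t ≤ M`, then `∑ Δ j t j ≤ M ∑ Δ⁺ j = M · TV`, so every implementing contract has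
budget at least `b / TV`. Conversely `t⋆ = (b / TV) · 1[Δ > 0]` gives `∑ Δ j t⋆ j = b` exactly,
and its budget is `b / TV` because `Δ` has a positive entry (`F₁ ≠ F₂` have the same total mass).
-/

open Finset

section

variable {ι K : Type*} [Fintype ι] [CommRing K] [LinearOrder K] [IsStrictOrderedRing K]

theorem exists_lt_of_sum_eq_of_ne {p q : ι → K} (hsum : ∑ j, p j = ∑ j, q j) (hne : p ≠ q) :
    ∃ j, p j < q j := by
  by_contra! hle
  refine hne (funext fun j => ?_)
  exact ((sum_eq_sum_iff_of_le fun j _ => hle j).mp hsum.symm j (mem_univ j)).symm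

theorem sum_max_sub_zero_pos {p q : ι → K} (hlt : ∃ j, p j < q j) :
    0 < ∑ j, max (q j - p j) 0 := by
  obtain ⟨j, hj⟩ := hlt
  exact sum_pos' (fun _ _ => le_max_right _ _)
    ⟨j, mem_univ j, lt_max_of_lt_left (sub_pos.mpr hj)⟩

theorem incentive_constraint_iff (p q t : ι → K) (b : K) :
    ∑ j, p j * t j - 0 ≤ ∑ j, q j * t j - b ↔ b ≤ ∑ j, (q j - p j) * t j := by
  simp only [sub_mul, sum_sub_distrib]
  constructor <;> intro h <;> linarith

theorem sum_sub_mul_indicator_lt (p q : ι → K) (c : K) :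
    ∑ j, (q j - p j) * (c * if p j < q j then 1 else 0) = c * ∑ j, max (q j - p j) 0 := by
  rw [mul_sum]
  refine sum_congr rfl fun j _ => ?_
  split_ifs with h
  · rw [max_eq_left (sub_nonneg.mpr h.le)]; ring
  · rw [max_eq_right (sub_nonpos.mpr (not_lt.mp h))]; ring

theorem sum_sub_mul_le_sum_max_sub_zero_mul {p q t : ι → K} {M : K}
    (ht : ∀ j, 0 ≤ t j) (htM : ∀ j, t j ≤ M) :
    ∑ j, (q j - p j) * t j ≤ (∑ j, max (q j - p j) 0) * M := by
  rw [sum_mul]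
  refine sum_le_sum fun j _ => ?_
  calc (q j - p j) * t j ≤ max (q j - p j) 0 * t j :=
        mul_le_mul_of_nonneg_right (le_max_left _ _) (ht j)
    _ ≤ max (q j - p j) 0 * M := mul_le_mul_of_nonneg_left (htM j) (le_max_right _ _)

end

theorem sup'_mul_indicator_eq {ι K : Type*} [Fintype ι] [MulZeroOneClass K] [LinearOrder K]
    {P : ι → Prop} [DecidablePred P] (hne : (univ : Finset ι).Nonempty)
    {c : K} (hc : 0 ≤ c) (hP : ∃ j, P j) :
    univ.sup' hne (fun j => c * if P j then 1 else 0) = c := by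
  obtain ⟨j, hj⟩ := hP
  refine le_antisymm (sup'_le _ _ fun i _ => ?_) ?_
  · split_ifs <;> simp [hc]
  · exact (le_sup'_iff _).mpr ⟨j, mem_univ j, by simp [hj]⟩

theorem two_action_min_budget_general
    (m : ℕ) (hm : 0 < m)
    (F1 F2 : Fin m → ℝ)
    (hF1sum : ∑ j, F1 j = 1) (hF2sum : ∑ j, F2 j = 1)
    (hne : F1 ≠ F2)
    (b : ℝ) (hb : 0 < b)
    (TV : ℝ) (hTV : TV = ∑ j, max (F2 j - F1 j) 0)
    (tStar : Fin m → ℝ)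
    (htStar : ∀ j, tStar j = b / TV * (if F1 j < F2 j then (1 : ℝ) else 0)) :
    (∑ j, F1 j * tStar j - 0 ≤ ∑ j, F2 j * tStar j - b) ∧
    (Finset.univ.sup' ⟨(⟨0, hm⟩ : Fin m), Finset.mem_univ _⟩ tStar = b / TV) ∧
    (∀ t : Fin m → ℝ, (∀ j, 0 ≤ t j) →
      (∑ j, F1 j * t j - 0 ≤ ∑ j, F2 j * t j - b) →
      b / TV ≤ Finset.univ.sup' ⟨(⟨0, hm⟩ : Fin m), Finset.mem_univ _⟩ t) := by
  have hlt := exists_lt_of_sum_eq_of_ne (hF1sum.trans hF2sum.symm) hne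
  have hTVpos : 0 < TV := hTV ▸ sum_max_sub_zero_pos hlt
  obtain rfl : tStar = fun j => b / TV * if F1 j < F2 j then 1 else 0 := funext htStar
  refine ⟨?_, sup'_mul_indicator_eq _ (div_pos hb hTVpos).le hlt, fun t ht hIC => ?_⟩
  · rw [incentive_constraint_iff, sum_sub_mul_indicator_lt, ← hTV, div_mul_cancel₀ b hTVpos.ne']
  · rw [div_le_iff₀ hTVpos, mul_comm, hTV]
    exact ((incentive_constraint_iff F1 F2 t b).mp hIC).trans
      (sum_sub_mul_le_sum_max_sub_zero_mul ht fun j => le_sup' t (mem_univ j))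

/-- Two-action min-budget contracts: with costs `(0, b)`, the minimum budget
is `b / TV(F₂, F₁)`, achieved by `t_j = (b/TV) · 1[F₂(j) > F₁(j)]`. -/
theorem two_action_min_budget
    (m : ℕ) (hm : 0 < m)
    (F1 F2 : Fin m → ℝ)
    (hF1 : ∀ j, 0 ≤ F1 j) (hF2 : ∀ j, 0 ≤ F2 j)
    (hF1sum : ∑ j, F1 j = 1) (hF2sum : ∑ j, F2 j = 1)
    (hne : F1 ≠ F2)
    (b : ℝ) (hb : 0 < b)
    (TV : ℝ) (hTV : TV = ∑ j, max (F2 j - F1 j) 0)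
    (tStar : Fin m → ℝ)
    (htStar : ∀ j, tStar j = b / TV * (if F1 j < F2 j then (1 : ℝ) else 0)) :
    (∑ j, F1 j * tStar j - 0 ≤ ∑ j, F2 j * tStar j - b) ∧
    (Finset.univ.sup' ⟨(⟨0, hm⟩ : Fin m), Finset.mem_univ _⟩ tStar = b / TV) ∧
    (∀ t : Fin m → ℝ, (∀ j, 0 ≤ t j) →
      (∑ j, F1 j * t j - 0 ≤ ∑ j, F2 j * t j - b) →
      b / TV ≤ Finset.univ.sup' ⟨(⟨0, hm⟩ : Fin m), Finset.mem_univ _⟩ t) :=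
  two_action_min_budget_general m hm F1 F2 hF1sum hF2sum hne b hb TV hTV tStar htStar
end
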